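/- Let T be a balanced subdivision of a star with ℓ ≥ 2 legs and depth t ≥ 1 (so T has tℓ + 1 vertices). Then the number of linear orders on the vertex set of T that are single-peaked on T is at least (ℓ!)^t. -/

import Mathlib

/-- `x` appears strictly before `y` in the list `l`. -/
def listBefore {V : Type*} (l : List V) (x y : V) : Prop :=
  ∃ i j : Fin l.length, i < j ∧ l.get i = x ∧ l.get j = y

/-- The restriction of `r` to the finite set `X` is single peaked with respect to the
restriction of `r'` to `X`. -/
def SinglePeakedOn {V : Type*} (X : Finset V) (r r' : V → V → Prop) : Prop :=
  ∀ p ∈ X, (∀ x ∈ X, x ≠ p → r p x) →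
    ∀ x ∈ X, ∀ y ∈ X, ((r' p x ∧ r' x y) ∨ (r' y x ∧ r' x p)) → r x y

/-- A linear order `r` on the vertex set of `G` is single peaked on the tree `G`. -/
def SinglePeakedOnTree {V : Type*} [DecidableEq V] (G : SimpleGraph V)
    (r : V → V → Prop) : Prop :=
  ∀ l : List V, l.Nodup → l.Chain' G.Adj →
    SinglePeakedOn l.toFinset r (listBefore l)

/-- The balanced subdivision of a star with `ℓ` legs and depth `t`: the vertex `none`
is the center, and `some (i, j)` is the `(j+1)`-st vertex on the `i`-th leg. -/
def starSubdivision (ℓ t : ℕ) : SimpleGraph (Option (Fin ℓ × Fin t)) :=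
  SimpleGraph.fromRel (fun a b =>
    (a = none ∧ ∃ p : Fin ℓ × Fin t, b = some p ∧ (p.2 : ℕ) = 0) ∨
    (∃ p q : Fin ℓ × Fin t, a = some p ∧ b = some q ∧ p.1 = q.1 ∧
      (q.2 : ℕ) = (p.2 : ℕ) + 1))

/-!
Choose for every depth `j` a permutation of the legs, and rank the vertices by depth first
(the center on top) and then, within depth `j`, by that permutation. In such an order every
vertex has at most one neighbour ranked above it, namely its parent, and any order with this
property is single-peaked on the graph: walking along a path away from its best vertex, the
first step goes down, and a step back up would give the vertex in between two better
neighbours. Distinct families of permutations give distinct orders, which yields `(ℓ!)^t` of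
them.
-/

open Function

section SinglePeaked

variable {V : Type*} {G : SimpleGraph V} {r : V → V → Prop}

theorem listBefore_reverse {l : List V} {x y : V} (h : listBefore l x y) :
    listBefore l.reverse y x := by
  obtain ⟨i, j, hij, rfl, rfl⟩ := h
  refine ⟨⟨l.length - 1 - j, by simp; omega⟩, ⟨l.length - 1 - i, by simp; omega⟩,
    Fin.lt_def.2 (by simp only; omega), ?_, ?_⟩ <;>
  simp only [List.get_eq_getElem, List.getElem_reverse] <;> congr 1 <;> omega

variable [IsStrictTotalOrder V r]

theorem isChain_of_isChain_adj (hr : ∀ x, {y | G.Adj x y ∧ r y x}.Subsingleton)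
    {a b : V} {l : List V} (hd : (a :: b :: l).Nodup) (hc : (a :: b :: l).IsChain G.Adj)
    (hab : r a b) : (a :: b :: l).IsChain r := by
  induction l generalizing a b with
  | nil => simpa using hab
  | cons c l ih =>
    rw [List.isChain_cons_cons] at hc ⊢
    refine ⟨hab, ih hd.tail hc.2 ?_⟩
    have hbc := List.rel_of_isChain_cons_cons hc.2
    rcases trichotomous_of r b c with h | rfl | h
    · exact h
    · exact absurd hbc G.irrefl
    · have hac : a = c := hr b ⟨hc.1.symm, hab⟩ ⟨hbc, h⟩
      simp [hac] at hd

theorem rel_of_listBefore_of_listBefore (hr : ∀ x, {y | G.Adj x y ∧ r y x}.Subsingleton)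
    {l : List V} (hd : l.Nodup) (hc : l.IsChain G.Adj) {p x y : V}
    (hp : ∀ z ∈ l, z ≠ p → r p z) (hpx : listBefore l p x) (hxy : listBefore l x y) :
    r x y := by
  obtain ⟨⟨i, hi⟩, ⟨j, hj⟩, hij, rfl, rfl⟩ := hpx
  obtain ⟨⟨j', hj'⟩, ⟨k, hk⟩, hjk, hjj', rfl⟩ := hxy
  obtain rfl : j = j' := by simpa using ((hd.get_inj_iff).1 hjj').symm
  simp only [Fin.mk_lt_mk, List.get_eq_getElem] at hij hjk hp ⊢
  have hsuffix : l.drop i = l[i] :: l[i + 1] :: l.drop (i + 1 + 1) := by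
    rw [List.drop_eq_getElem_cons, List.drop_eq_getElem_cons]
  have hstep : r l[i] l[i + 1] :=
    hp _ (List.getElem_mem _) fun h => by simpa using (hd.getElem_inj_iff).1 h
  have hchain : (l.drop i).IsChain r := by
    rw [hsuffix]
    exact isChain_of_isChain_adj hr (hsuffix ▸ hd.sublist (List.drop_sublist _ _))
      (hsuffix ▸ hc.drop _) hstep
  have := List.pairwise_iff_getElem.1 hchain.pairwise (j - i) (k - i)
    (by simp; omega) (by simp; omega) (by omega)
  simp only [List.getElem_drop] at this
  convert this using 3 <;> omega

theorem singlePeakedOnTree_of_subsingleton_preferred_adj [DecidableEq V]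
    (hr : ∀ x, {y | G.Adj x y ∧ r y x}.Subsingleton) : SinglePeakedOnTree G r := by
  intro l hd hc p _ hp x _ y _ h
  simp only [List.mem_toFinset] at hp
  rcases h with ⟨hpx, hxy⟩ | ⟨hyx, hxp⟩
  · exact rel_of_listBefore_of_listBefore hr hd hc hp hpx hxy
  · exact rel_of_listBefore_of_listBefore hr (List.nodup_reverse.2 hd)
      (List.isChain_reverse.2 (hc.imp fun _ _ h => h.symm)) (by simpa using hp)
      (listBefore_reverse hxp) (listBefore_reverse hyx)

end SinglePeaked

theorem Equiv.Perm.eq_of_lt_iff_lt {α : Type*} [LinearOrder α] [WellFoundedLT α]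
    {σ τ : Equiv.Perm α} (h : ∀ a b, σ a < σ b ↔ τ a < τ b) : σ = τ := by
  let e : α ≃o α := StrictMono.orderIsoOfSurjective (σ.symm.trans τ)
    (fun x y hxy => by simpa [← h] using hxy) (σ.symm.trans τ).surjective
  ext a
  simpa [e] using congrArg (· (σ a)) (Subsingleton.elim e (OrderIso.refl α)).symm

namespace starSubdivision

variable {ℓ t : ℕ}

def parent (ℓ t : ℕ) (a b : Option (Fin ℓ × Fin t)) : Prop :=
  (a = none ∧ ∃ p : Fin ℓ × Fin t, b = some p ∧ (p.2 : ℕ) = 0) ∨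
    (∃ p q : Fin ℓ × Fin t, a = some p ∧ b = some q ∧ p.1 = q.1 ∧
      (q.2 : ℕ) = (p.2 : ℕ) + 1)

theorem adj_iff {a b : Option (Fin ℓ × Fin t)} :
    (starSubdivision ℓ t).Adj a b ↔ a ≠ b ∧ (parent ℓ t a b ∨ parent ℓ t b a) :=
  SimpleGraph.fromRel_adj _ _ _

theorem parent_unique {x y z : Option (Fin ℓ × Fin t)} (hy : parent ℓ t y x)
    (hz : parent ℓ t z x) : y = z := by
  rcases hy with ⟨rfl, q, rfl, hq⟩ | ⟨p, q, rfl, rfl, hpq, hq⟩ <;>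
  rcases hz with ⟨rfl, q', hq', hq'0⟩ | ⟨p', q', rfl, hq', hpq', hq'1⟩ <;>
  obtain rfl := Option.some.inj hq'
  · rfl
  · omega
  · omega
  · simp only [Option.some.injEq, Prod.ext_iff, Fin.ext_iff]
    omega

def levelKey (f : Fin t → Equiv.Perm (Fin ℓ)) :
    Option (Fin ℓ × Fin t) → WithBot (Fin t ×ₗ Fin ℓ)
  | none => ⊥
  | some (i, j) => (toLex (j, f j i) : Fin t ×ₗ Fin ℓ)

theorem levelKey_injective (f : Fin t → Equiv.Perm (Fin ℓ)) : Injective (levelKey f) := by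
  rintro (_ | ⟨i, j⟩) (_ | ⟨i', j'⟩) h <;> simp [levelKey] at h ⊢
  obtain ⟨rfl, h⟩ := h
  simpa using (f j).injective h

theorem levelKey_lt_of_parent (f : Fin t → Equiv.Perm (Fin ℓ)) {a b : Option (Fin ℓ × Fin t)}
    (h : parent ℓ t a b) : levelKey f a < levelKey f b := by
  rcases h with ⟨rfl, q, rfl, -⟩ | ⟨p, q, rfl, rfl, -, hq⟩
  · exact WithBot.bot_lt_coe _
  · simp only [levelKey, WithBot.coe_lt_coe, Prod.Lex.toLex_lt_toLex, Fin.lt_def]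
    omega

def levelOrder (f : Fin t → Equiv.Perm (Fin ℓ)) :
    Option (Fin ℓ × Fin t) → Option (Fin ℓ × Fin t) → Prop :=
  (· < ·) on levelKey f

instance isStrictTotalOrder_levelOrder (f : Fin t → Equiv.Perm (Fin ℓ)) :
    IsStrictTotalOrder _ (levelOrder f) :=
  (levelKey_injective f).isStrictTotalOrder_onFun _

theorem singlePeakedOnTree_levelOrder (f : Fin t → Equiv.Perm (Fin ℓ)) :
    SinglePeakedOnTree (starSubdivision ℓ t) (levelOrder f) := by
  refine singlePeakedOnTree_of_subsingleton_preferred_adj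
    fun x y ⟨hxy, hyx⟩ z ⟨hxz, hzx⟩ => ?_
  have parent_of_adj :
      ∀ w, (starSubdivision ℓ t).Adj x w → levelOrder f w x → parent ℓ t w x :=
    fun w hxw hwx => (adj_iff.1 hxw).2.resolve_left
      fun h => (levelKey_lt_of_parent f h).not_gt hwx
  exact parent_unique (parent_of_adj y hxy hyx) (parent_of_adj z hxz hzx)

theorem levelOrder_injective : Injective (levelOrder (ℓ := ℓ) (t := t)) := by
  intro f g h
  funext j
  refine Equiv.Perm.eq_of_lt_iff_lt fun a b => ?_
  simpa [levelOrder, levelKey, onFun, Prod.Lex.toLex_lt_toLex] using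
    congrFun (congrFun h (some (a, j))) (some (b, j))

end starSubdivision

theorem starSubdivision_singlePeaked_count_general
    (ℓ t : ℕ) :
    (Nat.factorial ℓ) ^ t ≤
      Nat.card {r : Option (Fin ℓ × Fin t) → Option (Fin ℓ × Fin t) → Prop //
        IsStrictTotalOrder (Option (Fin ℓ × Fin t)) r ∧
        SinglePeakedOnTree (starSubdivision ℓ t) r} := by
  calc (Nat.factorial ℓ) ^ t
      = Nat.card (Fin t → Equiv.Perm (Fin ℓ)) := by simp [Fintype.card_perm]
    _ ≤ _ := Nat.card_le_card_of_injective
      (fun f => ⟨starSubdivision.levelOrder f, inferInstance,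
        starSubdivision.singlePeakedOnTree_levelOrder f⟩)
      fun _ _ h => starSubdivision.levelOrder_injective (congrArg Subtype.val h)

/-- The number of linear orders on the vertex set of a balanced subdivision of a star
with `ℓ ≥ 2` legs and depth `t ≥ 1` that are single peaked on it is at least `(ℓ!)^t`. -/
theorem starSubdivision_singlePeaked_count
    (ℓ t : ℕ) (hℓ : 2 ≤ ℓ) (ht : 1 ≤ t) :
    (Nat.factorial ℓ) ^ t ≤
      Nat.card {r : Option (Fin ℓ × Fin t) → Option (Fin ℓ × Fin t) → Prop //
        IsStrictTotalOrder (Option (Fin ℓ × Fin t)) r ∧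
        SinglePeakedOnTree (starSubdivision ℓ t) r} :=
  starSubdivision_singlePeaked_count_general ℓ t
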